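/- Let Y = ℤ/M with M ≥ 2, fix y₀ ∈ Y, and on ℂ^Y let F = (1/M) Σ_{v,w ∈ Y} ω^{(w−v)y₀} |w⟩⟨v| with ω = e^{2πi/M}. Let P = ((M−1)/M²) Σ_{v,w ∈ Y∖{0}} ω^{(w−v)y₀} |w⟩⟨v|. Then F is an orthogonal projector of rank 1, and the k-fold tensor products satisfy ‖F^{⊗k} − (F·Q)^{⊗k}‖² ≤ 1 − 2(1−1/M)^{2k} + (1−1/M)^{3k} ≤ 2k/M, where F·Q per factor equals P. -/

import Mathlib

/-- Spectral norm (ℓ₂ → ℓ₂ operator norm) of a complex square matrix. -/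
noncomputable def specNorm {n : Type*} [Fintype n] [DecidableEq n]
    (A : Matrix n n ℂ) : ℝ :=
  ‖Matrix.toEuclideanCLM (𝕜 := ℂ) A‖

/-- `ω^z` where `ω = e^{2πi/M}` and `z ∈ ℤ/M`. -/
noncomputable def omegaPow (M : ℕ) [NeZero M] (z : ZMod M) : ℂ :=
  Complex.exp (2 * Real.pi * Complex.I * (z.val : ℕ) / (M : ℕ))

/-- `F = (1/M) Σ_{v,w ∈ Y} ω^{(w−v)y₀} |w⟩⟨v|`. -/
noncomputable def Fmat (M : ℕ) [NeZero M] (y₀ : ZMod M) :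
    Matrix (ZMod M) (ZMod M) ℂ :=
  Matrix.of fun w v => (1 / (M : ℂ)) * omegaPow M ((w - v) * y₀)

/-- `Q = (1/M) Σ_{v,w ∈ Y∖{0}} ω^{(w−v)y₀} |w⟩⟨v|`. -/
noncomputable def Qmat (M : ℕ) [NeZero M] (y₀ : ZMod M) :
    Matrix (ZMod M) (ZMod M) ℂ :=
  Matrix.of fun w v =>
    if v = 0 ∨ w = 0 then 0 else (1 / (M : ℂ)) * omegaPow M ((w - v) * y₀)

/-- `P = ((M−1)/M²) Σ_{v ∈ Y∖{0}, w ∈ Y} ω^{(w−v)y₀} |w⟩⟨v|`. -/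
noncomputable def Pmat (M : ℕ) [NeZero M] (y₀ : ZMod M) :
    Matrix (ZMod M) (ZMod M) ℂ :=
  Matrix.of fun w v =>
    if v = 0 then 0 else (((M : ℂ) - 1) / (M : ℂ) ^ 2) * omegaPow M ((w - v) * y₀)

/-- The `k`-fold tensor power of a matrix on `ℂ^Y`, as a matrix indexed by
`Fin k → Y`. -/
noncomputable def mtensorPow (M : ℕ) [NeZero M] (k : ℕ)
    (A : Matrix (ZMod M) (ZMod M) ℂ) :
    Matrix (Fin k → ZMod M) (Fin k → ZMod M) ℂ :=
  Matrix.of fun p q => ∏ m, A (p m) (q m)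


namespace CPBHelper

open Complex

variable (M : ℕ) [NeZero M]

lemma omegaPow_eq (z : ZMod M) :
    omegaPow M z = Complex.exp (2 * Real.pi * Complex.I / M) ^ z.val := by
  rw [omegaPow, ← Complex.exp_nat_mul]
  ring_nf

lemma zeta_pow_M : Complex.exp (2 * Real.pi * Complex.I / M) ^ M = 1 := by
  rw [← Complex.exp_nat_mul]
  have hM : (M : ℂ) ≠ 0 := Nat.cast_ne_zero.mpr (NeZero.ne M)
  rw [show (M : ℂ) * (2 * Real.pi * Complex.I / M) = 2 * Real.pi * Complex.I by
    field_simp]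
  simpa [mul_comm] using Complex.exp_two_pi_mul_I

lemma zeta_pow_mod (a : ℕ) :
    Complex.exp (2 * Real.pi * Complex.I / M) ^ (a % M) =
      Complex.exp (2 * Real.pi * Complex.I / M) ^ a := by
  conv_rhs => rw [← Nat.div_add_mod a M]
  rw [pow_add, pow_mul, zeta_pow_M, one_pow, one_mul]

lemma omegaPow_add (x y : ZMod M) :
    omegaPow M (x + y) = omegaPow M x * omegaPow M y := by
  rw [omegaPow_eq, omegaPow_eq, omegaPow_eq, ← pow_add, ZMod.val_add, zeta_pow_mod]

lemma omegaPow_zero : omegaPow M 0 = 1 := by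
  simp [omegaPow]

lemma abs_omegaPow (z : ZMod M) : ‖omegaPow M z‖ = 1 := by
  rw [omegaPow, show (2 * Real.pi * Complex.I * (z.val : ℕ) / (M : ℕ) : ℂ)
      = ((2 * Real.pi * z.val / M : ℝ) : ℂ) * Complex.I by push_cast; ring,
    Complex.norm_exp_ofReal_mul_I]

lemma conj_omegaPow (z : ZMod M) :
    (starRingEnd ℂ) (omegaPow M z) = omegaPow M (-z) := by
  have h1 : omegaPow M z * omegaPow M (-z) = 1 := by
    rw [← omegaPow_add, add_neg_cancel, omegaPow_zero]
  rw [← Complex.inv_eq_conj (abs_omegaPow M z)]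
  exact (eq_inv_of_mul_eq_one_left (by rwa [mul_comm] at h1)).symm

variable (y₀ : ZMod M)

lemma hMC : (M : ℂ) ≠ 0 := Nat.cast_ne_zero.mpr (NeZero.ne M)

lemma Fmat_herm : (Fmat M y₀).IsHermitian := by
  ext w v
  simp only [Matrix.conjTranspose_apply, Fmat, Matrix.of_apply, star_mul',
    RCLike.star_def, map_div₀, map_one, map_natCast, conj_omegaPow]
  rw [show -((v - w) * y₀) = (w - v) * y₀ by ring]

lemma Fmat_idem : Fmat M y₀ * Fmat M y₀ = Fmat M y₀ := by
  ext w v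
  simp only [Matrix.mul_apply, Fmat, Matrix.of_apply]
  have key : ∀ u : ZMod M, (1 / (M:ℂ) * omegaPow M ((w - u) * y₀)) *
      (1 / (M:ℂ) * omegaPow M ((u - v) * y₀)) =
      (1 / (M:ℂ))^2 * omegaPow M ((w - v) * y₀) := by
    intro u
    rw [mul_mul_mul_comm, ← omegaPow_add, show (w - u) * y₀ + (u - v) * y₀ = (w - v) * y₀
      by ring, sq]
  rw [Finset.sum_congr rfl fun u _ => key u, Finset.sum_const, Finset.card_univ,
    ZMod.card, nsmul_eq_mul]
  have := hMC M
  field_simp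

lemma FQ_eq_P : Fmat M y₀ * Qmat M y₀ = Pmat M y₀ := by
  ext w v
  simp only [Matrix.mul_apply, Fmat, Qmat, Pmat, Matrix.of_apply]
  by_cases hv : v = 0
  · simp [hv]
  · have key : ∀ u : ZMod M, (1 / (M:ℂ) * omegaPow M ((w - u) * y₀)) *
        (if v = 0 ∨ u = 0 then 0 else 1 / (M:ℂ) * omegaPow M ((u - v) * y₀)) =
        (if u = 0 then 0 else (1 / (M:ℂ))^2 * omegaPow M ((w - v) * y₀)) := by
      intro u
      by_cases hu : u = 0
      · simp [hu]
      · simp only [hv, hu, or_self, if_false]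
        rw [mul_mul_mul_comm, ← omegaPow_add, show (w - u) * y₀ + (u - v) * y₀ = (w - v) * y₀
          by ring, sq]
    rw [Finset.sum_congr rfl fun u _ => key u, Finset.sum_ite, Finset.sum_const_zero,
      Finset.sum_const, zero_add, nsmul_eq_mul, if_neg hv]
    have hcard : (Finset.univ.filter fun u : ZMod M => ¬u = 0).card = M - 1 := by
      rw [Finset.filter_not, Finset.card_sdiff_of_subset (Finset.filter_subset _ _)]
      simp [Finset.filter_eq', ZMod.card]
    rw [hcard]
    have h1M : 1 ≤ M := Nat.one_le_iff_ne_zero.mpr (NeZero.ne M)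
    rw [Nat.cast_sub h1M]
    have := hMC M
    push_cast
    field_simp

lemma Fmat_rank : (Fmat M y₀).rank = 1 := by
  have hle : (Fmat M y₀).rank ≤ 1 := by
    have heq : Fmat M y₀ = Matrix.replicateCol Unit (fun w => (1 / (M:ℂ)) * omegaPow M (w * y₀)) *
        Matrix.replicateRow Unit (fun v => omegaPow M (-v * y₀)) := by
      rw [← Matrix.vecMulVec_eq]
      ext w v
      simp only [Fmat, Matrix.of_apply, Matrix.vecMulVec_apply]
      rw [mul_assoc, ← omegaPow_add, show w * y₀ + -v * y₀ = (w - v) * y₀ by ring]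
    rw [heq]
    exact (Matrix.rank_mul_le_left _ _).trans
      ((Matrix.rank_le_card_width _).trans (by simp))
  have hne : (Fmat M y₀).rank ≠ 0 := by
    intro h0
    have : LinearMap.range (Fmat M y₀).mulVecLin = ⊥ := by
      rw [Matrix.rank] at h0
      exact Submodule.finrank_eq_zero.mp h0
    have h4 := LinearMap.mem_range_self (Fmat M y₀).mulVecLin (fun v => omegaPow M (v * y₀))
    rw [this, Submodule.mem_bot, Matrix.mulVecLin_apply] at h4
    have h5 := congrFun h4 0
    simp only [Matrix.mulVec, dotProduct, Fmat, Matrix.of_apply, Pi.zero_apply] at h5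
    have key : ∀ v : ZMod M, (1 / (M:ℂ) * omegaPow M ((0 - v) * y₀)) * omegaPow M (v * y₀)
        = 1 / (M:ℂ) := by
      intro v
      rw [mul_assoc, ← omegaPow_add, show (0 - v) * y₀ + v * y₀ = 0 by ring, omegaPow_zero,
        mul_one]
    rw [Finset.sum_congr rfl fun v _ => key v, Finset.sum_const, Finset.card_univ, ZMod.card,
      nsmul_eq_mul] at h5
    have := hMC M
    field_simp at h5
    exact one_ne_zero h5
  omega

lemma specNorm_sq_le_frob {n : Type*} [Fintype n] [DecidableEq n] (A : Matrix n n ℂ) :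
    specNorm A ^ 2 ≤ ∑ i, ∑ j, ‖A i j‖ ^ 2 := by
  set S : ℝ := ∑ i, ∑ j, ‖A i j‖ ^ 2 with hS
  have hS0 : 0 ≤ S := Finset.sum_nonneg fun i _ => Finset.sum_nonneg fun j _ => sq_nonneg _
  have key : ∀ x : EuclideanSpace ℂ n,
      ‖Matrix.toEuclideanCLM (𝕜 := ℂ) A x‖ ≤ Real.sqrt S * ‖x‖ := by
    intro x
    have happ : ∀ i, (Matrix.toEuclideanCLM (𝕜 := ℂ) A x) i = ∑ j, A i j * x j := by
      intro i
      have := congrFun (Matrix.ofLp_toEuclideanCLM (𝕜 := ℂ) A x) i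
      simpa [Matrix.mulVec, dotProduct] using this
    have hxsq : ‖x‖ ^ 2 = ∑ j, ‖x j‖ ^ 2 := by
      rw [EuclideanSpace.norm_eq, Real.sq_sqrt]
      exact Finset.sum_nonneg fun j _ => sq_nonneg _
    have hTx : ‖Matrix.toEuclideanCLM (𝕜 := ℂ) A x‖ ^ 2 ≤ S * ‖x‖ ^ 2 := by
      rw [EuclideanSpace.norm_eq, Real.sq_sqrt
        (Finset.sum_nonneg fun i _ => sq_nonneg _)]
      rw [hxsq, hS, Finset.sum_mul]
      refine Finset.sum_le_sum fun i _ => ?_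
      rw [happ i]
      calc ‖∑ j, A i j * x j‖ ^ 2 ≤ (∑ j, ‖A i j‖ * ‖x j‖) ^ 2 := by
            apply pow_le_pow_left₀ (norm_nonneg _)
            exact (norm_sum_le _ _).trans (le_of_eq (Finset.sum_congr rfl fun j _ =>
              norm_mul _ _))
        _ ≤ (∑ j, ‖A i j‖ ^ 2) * ∑ j, ‖x j‖ ^ 2 :=
            Finset.sum_mul_sq_le_sq_mul_sq _ _ _
    have h1 : ‖Matrix.toEuclideanCLM (𝕜 := ℂ) A x‖ ≤ Real.sqrt (S * ‖x‖ ^ 2) := by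
      rw [Real.le_sqrt (norm_nonneg _) (mul_nonneg hS0 (sq_nonneg _))]
      exact hTx
    calc ‖Matrix.toEuclideanCLM (𝕜 := ℂ) A x‖ ≤ Real.sqrt (S * ‖x‖ ^ 2) := h1
      _ = Real.sqrt S * ‖x‖ := by
          rw [Real.sqrt_mul hS0, Real.sqrt_sq (norm_nonneg _)]
  have := ContinuousLinearMap.opNorm_le_bound _ (Real.sqrt_nonneg S) key
  calc specNorm A ^ 2 ≤ Real.sqrt S ^ 2 :=
        pow_le_pow_left₀ (norm_nonneg _) this 2
    _ = S := Real.sq_sqrt hS0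

variable (k : ℕ)

open Classical in
lemma Dentry (p q : Fin k → ZMod M) :
    (mtensorPow M k (Fmat M y₀) - mtensorPow M k (Pmat M y₀)) p q =
    (((if ∀ m, q m ≠ 0 then (1/(M:ℝ))^k - (((M:ℝ)-1)/(M:ℝ)^2)^k else (1/(M:ℝ))^k) : ℝ) : ℂ)
      * ∏ m, omegaPow M ((p m - q m) * y₀) := by
  simp only [Matrix.sub_apply, mtensorPow, Matrix.of_apply, Fmat, Pmat]
  have hF : ∏ m, ((1/(M:ℂ)) * omegaPow M ((p m - q m) * y₀))
      = (1/(M:ℂ))^k * ∏ m, omegaPow M ((p m - q m) * y₀) := by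
    rw [Finset.prod_mul_distrib, Finset.prod_const, Finset.card_univ, Fintype.card_fin]
  by_cases hq : ∀ m, q m ≠ 0
  · have hP : (∏ m, (if q m = 0 then 0
        else (((M:ℂ)-1)/(M:ℂ)^2) * omegaPow M ((p m - q m) * y₀)))
        = (((M:ℂ)-1)/(M:ℂ)^2)^k * ∏ m, omegaPow M ((p m - q m) * y₀) := by
      rw [Finset.prod_congr rfl fun m _ => if_neg (hq m), Finset.prod_mul_distrib,
        Finset.prod_const, Finset.card_univ, Fintype.card_fin]
    rw [hF, hP, if_pos hq, ← sub_mul]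
    push_cast
    ring
  · push_neg at hq
    obtain ⟨m₀, hm₀⟩ := hq
    have hP : (∏ m, (if q m = 0 then 0
        else (((M:ℂ)-1)/(M:ℂ)^2) * omegaPow M ((p m - q m) * y₀))) = 0 :=
      Finset.prod_eq_zero (Finset.mem_univ m₀) (by rw [if_pos hm₀])
    rw [hF, hP, if_neg (by push_neg; exact ⟨m₀, hm₀⟩), sub_zero]
    push_cast
    ring

open Classical in
lemma Dabs (p q : Fin k → ZMod M) :
    ‖(mtensorPow M k (Fmat M y₀) - mtensorPow M k (Pmat M y₀)) p q‖ ^ 2 =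
    (if ∀ m, q m ≠ 0 then ((1/(M:ℝ))^k - (((M:ℝ)-1)/(M:ℝ)^2)^k)^2 else ((1/(M:ℝ))^k)^2) := by
  rw [Dentry M y₀ k p q, norm_mul, Complex.norm_real, norm_prod]
  have h1 : ∀ m : Fin k, ‖omegaPow M ((p m - q m) * y₀)‖ = 1 := fun m => by
    rw [abs_omegaPow]
  rw [Finset.prod_congr rfl fun m _ => h1 m, Finset.prod_const_one, mul_one]
  rw [Real.norm_eq_abs, _root_.sq_abs]
  split_ifs <;> rfl

lemma count_ne : (Finset.univ.filter fun q : Fin k → ZMod M => ∀ m, q m ≠ 0).card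
    = (M - 1) ^ k := by
  rw [← Fintype.card_subtype]
  rw [Fintype.card_congr (Equiv.subtypePiEquivPi (p := fun _ (x : ZMod M) => x ≠ 0)),
    Fintype.card_pi]
  have h : Fintype.card {x : ZMod M // x ≠ 0} = M - 1 := by
    rw [Fintype.card_subtype_compl, Fintype.card_subtype_eq, ZMod.card]
  simp [h]

lemma arith (x : ℝ) (hx : 2 ≤ x) (k : ℕ) :
    x^k * ((x-1)^k * ((1/x)^k - ((x-1)/x^2)^k)^2 + (x^k - (x-1)^k) * ((1/x)^k)^2)
    = 1 - 2*(1-1/x)^(2*k) + (1-1/x)^(3*k) := by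
  have hx0 : x ≠ 0 := by linarith
  have h1 : (1:ℝ) - 1/x = (x-1)/x := by field_simp
  rw [h1, div_pow, div_pow, div_pow, one_pow,
    show ((x^2)^k) = (x^k)^2 from pow_right_comm x 2 k,
    show 2*k = k*2 by ring, show 3*k = k*3 by ring, pow_mul, pow_mul, div_pow]
  have hu : x^k ≠ 0 := pow_ne_zero _ hx0
  generalize x^k = u at *
  generalize (x-1)^k = v
  field_simp
  ring

open Classical in
lemma frob_eq (hM : 2 ≤ M) :
    (∑ p : Fin k → ZMod M, ∑ q : Fin k → ZMod M,
      ‖(mtensorPow M k (Fmat M y₀) - mtensorPow M k (Pmat M y₀)) p q‖ ^ 2)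
    = 1 - 2*(1 - 1/(M:ℝ))^(2*k) + (1 - 1/(M:ℝ))^(3*k) := by
  have hcard : Fintype.card (Fin k → ZMod M) = M^k := by simp [ZMod.card]
  set a : ℝ := ((1/(M:ℝ))^k - (((M:ℝ)-1)/(M:ℝ)^2)^k)^2 with ha
  set b : ℝ := ((1/(M:ℝ))^k)^2 with hb
  have hq : ∀ p : Fin k → ZMod M, (∑ q : Fin k → ZMod M,
      ‖(mtensorPow M k (Fmat M y₀) - mtensorPow M k (Pmat M y₀)) p q‖ ^ 2)
      = ((M-1)^k : ℕ) * a + ((M^k - (M-1)^k : ℕ)) * b := by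
    intro p
    rw [Finset.sum_congr rfl fun q _ => Dabs M y₀ k p q, Finset.sum_ite,
      Finset.sum_const, Finset.sum_const, count_ne]
    have h2 : (Finset.univ.filter fun q : Fin k → ZMod M => ¬∀ m, q m ≠ 0).card
        = M^k - (M-1)^k := by
      rw [Finset.filter_not, Finset.card_sdiff_of_subset (Finset.filter_subset _ _),
        Finset.card_univ, hcard, count_ne]
    rw [h2, nsmul_eq_mul, nsmul_eq_mul]
  rw [Finset.sum_congr rfl fun p _ => hq p, Finset.sum_const, Finset.card_univ, hcard,
    nsmul_eq_mul]
  have h1M : 1 ≤ M := le_trans one_le_two hM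
  have hlepow : (M-1)^k ≤ M^k := Nat.pow_le_pow_left (Nat.sub_le M 1) k
  rw [Nat.cast_sub hlepow]
  push_cast [Nat.cast_sub h1M]
  have harith := arith (M:ℝ) (by exact_mod_cast hM) k
  rw [← harith, ha, hb]

lemma tail (hM : 2 ≤ M) (k : ℕ) :
    1 - 2*(1 - 1/(M:ℝ))^(2*k) + (1 - 1/(M:ℝ))^(3*k) ≤ 2*k/(M:ℝ) := by
  have hM1 : (2:ℝ) ≤ M := by exact_mod_cast hM
  have hinv : 1/(M:ℝ) ≤ 1 := by rw [div_le_one (by linarith)]; linarith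
  have hinv0 : 0 ≤ 1/(M:ℝ) := by positivity
  have ht0 : 0 ≤ 1 - 1/(M:ℝ) := by linarith
  have ht1 : 1 - 1/(M:ℝ) ≤ 1 := by linarith
  have h32 : (1 - 1/(M:ℝ))^(3*k) ≤ (1 - 1/(M:ℝ))^(2*k) :=
    pow_le_pow_of_le_one ht0 ht1 (by omega)
  have hber := one_add_mul_le_pow (a := -(1/(M:ℝ))) (by linarith) (2*k)
  have hb' : 1 - (2*(k:ℝ))/M ≤ (1 - 1/(M:ℝ))^(2*k) := by
    have e1 : (1 : ℝ) + -(1/(M:ℝ)) = 1 - 1/(M:ℝ) := by ring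
    rw [e1] at hber
    calc 1 - (2*(k:ℝ))/M = 1 + (2*k : ℕ) * (-(1/(M:ℝ))) := by push_cast; ring
      _ ≤ _ := hber
  linarith

end CPBHelper

/-- `F` is a rank-one orthogonal projector, `F·Q = P`, and
`‖F^{⊗k} − (F·Q)^{⊗k}‖² ≤ 1 − 2(1−1/M)^{2k} + (1−1/M)^{3k} ≤ 2k/M` for
`1 ≤ k < M`. -/
theorem compressed_projection_bound (M : ℕ) [NeZero M] (hM : 2 ≤ M)
    (y₀ : ZMod M) (k : ℕ) (hk : 1 ≤ k) (hkM : k < M) :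
    (Fmat M y₀).IsHermitian ∧ Fmat M y₀ * Fmat M y₀ = Fmat M y₀ ∧
    (Fmat M y₀).rank = 1 ∧
    Fmat M y₀ * Qmat M y₀ = Pmat M y₀ ∧
    specNorm (mtensorPow M k (Fmat M y₀) - mtensorPow M k (Fmat M y₀ * Qmat M y₀)) ^ 2
      ≤ 1 - 2 * (1 - 1 / (M : ℝ)) ^ (2 * k) + (1 - 1 / (M : ℝ)) ^ (3 * k) ∧
    1 - 2 * (1 - 1 / (M : ℝ)) ^ (2 * k) + (1 - 1 / (M : ℝ)) ^ (3 * k)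
      ≤ 2 * k / M := by
  refine ⟨CPBHelper.Fmat_herm M y₀, CPBHelper.Fmat_idem M y₀, CPBHelper.Fmat_rank M y₀,
    CPBHelper.FQ_eq_P M y₀, ?_, CPBHelper.tail M hM k⟩
  rw [CPBHelper.FQ_eq_P M y₀]
  calc specNorm (mtensorPow M k (Fmat M y₀) - mtensorPow M k (Pmat M y₀)) ^ 2
      ≤ ∑ p : Fin k → ZMod M, ∑ q : Fin k → ZMod M,
          ‖(mtensorPow M k (Fmat M y₀) - mtensorPow M k (Pmat M y₀)) p q‖ ^ 2 := by
        have h := CPBHelper.specNorm_sq_le_frob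
          (mtensorPow M k (Fmat M y₀) - mtensorPow M k (Pmat M y₀))
        simpa using h
    _ = 1 - 2 * (1 - 1 / (M : ℝ)) ^ (2 * k) + (1 - 1 / (M : ℝ)) ^ (3 * k) :=
        CPBHelper.frob_eq M y₀ k hM
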